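/- For every nonnegative integer n, the shifted Hankel determinant d_1(n,t) = \det( M_{1+i+j}(t) )_{i,j=0}^{n-1} equals the Fibonacci polynomial F_n(t) (with the convention d_1(0,t) = 1 = F_0(t)). -/

import Mathlib

/-!
Let `L = (M_{i,k}(t))` be the Motzkin triangle and `T` the tridiagonal matrix with `t` on the
diagonal and `1` next to it. The recurrence for `M_{n,k}` says that multiplying row `i` of `L`
by `T` gives the row of paths of length `i + 1`; as `T` is symmetric, this yields
`∑ₖ M_{a,k} M_{b,k} = M_{a+b}` (cut a path after `a` steps). Hence the shifted Hankel matrix is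
`L T Lᵀ`, and since `L` is unitriangular its determinant is `det T`, which satisfies the
Fibonacci recurrence by cofactor expansion.
-/

open Polynomial

/-- The weight polynomials `M_{n,k}(t)` of Motzkin paths from `(0,0)` to `(n,k)`. -/
noncomputable def motzkinPoly : ℕ → ℤ → Polynomial ℤ
  | 0, k => if k = 0 then 1 else 0
  | n + 1, k =>
      if k < 0 then 0 else
        motzkinPoly n (k - 1) + X * motzkinPoly n k + motzkinPoly n (k + 1)
  termination_by n _ => n


/-- The Fibonacci polynomials: `F_0 = 1`, `F_1 = t`, `F_n = t·F_{n-1} - F_{n-2}`. -/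
noncomputable def fibPoly : ℕ → Polynomial ℤ
  | 0 => 1
  | 1 => X
  | n + 2 => X * fibPoly (n + 1) - fibPoly n

namespace Matrix

variable {R : Type*} [CommRing R]

def tridiag (a : R) (n : ℕ) : Matrix (Fin n) (Fin n) R :=
  of fun i j =>
    if (i : ℕ) = j then a else if (i : ℕ) + 1 = j ∨ (j : ℕ) + 1 = i then 1 else 0

lemma isSymm_tridiag (a : R) (n : ℕ) : (tridiag a n).IsSymm := by
  ext i j
  simp only [transpose_apply, tridiag, of_apply, eq_comm, or_comm]

lemma sum_mul_tridiag_apply (g : ℤ → R) (a : R) {n : ℕ} (k : Fin n) :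
    ∑ l : Fin n, g l * tridiag a n l k =
      (if 0 < (k : ℕ) then g ((k : ℤ) - 1) else 0) + a * g k +
        (if (k : ℕ) + 1 < n then g ((k : ℤ) + 1) else 0) := by
  have hsplit : ∀ l : ℕ,
      (if l = k then a else if l + 1 = k ∨ (k : ℕ) + 1 = l then 1 else 0) =
        (if l + 1 = k then 1 else 0) + (if (k : ℕ) = l then a else 0) +
          (if (k : ℕ) + 1 = l then 1 else 0) := by
    intro l
    split_ifs <;> first | (exfalso; omega) | simp
  simp only [tridiag, of_apply]
  rw [Fin.sum_univ_eq_sum_range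
    (fun l => g l * if l = k then a else if l + 1 = k ∨ (k : ℕ) + 1 = l then 1 else 0) n]
  simp only [hsplit, mul_add, Finset.sum_add_distrib, mul_ite, mul_one, mul_zero,
    Finset.sum_ite_eq, Finset.mem_range, k.isLt]
  obtain ⟨_ | k, hk⟩ := k
  · simp [mul_comm a]
  · simp [Finset.sum_ite_eq', mul_comm a, Nat.lt_of_succ_lt hk]

lemma tridiag_submatrix_succ (a : R) (n : ℕ) :
    (tridiag a (n + 1)).submatrix Fin.succ Fin.succ = tridiag a n := by
  ext i j
  simp [tridiag]

lemma det_tridiag_succ_succ (a : R) (n : ℕ) :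
    (tridiag a (n + 2)).det = a * (tridiag a (n + 1)).det - (tridiag a n).det := by
  have hminor : ((tridiag a (n + 2)).submatrix (Fin.succAbove 1) Fin.succ).det =
      (tridiag a n).det := by
    have hsub : ((tridiag a (n + 2)).submatrix (Fin.succAbove 1) Fin.succ).submatrix Fin.succ
        (Fin.succAbove 0) = tridiag a n := by
      ext i j
      simp [tridiag, Fin.succAbove]
    rw [det_succ_row_zero, Fin.sum_univ_succ, hsub]
    simp [tridiag, Fin.succAbove]
  have h00 : tridiag a (n + 2) 0 0 = a := by simp [tridiag]
  have h10 : tridiag a (n + 2) 1 0 = 1 := by simp [tridiag]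
  have hcol : ∀ i : Fin n, tridiag a (n + 2) i.succ.succ 0 = 0 := fun i => by simp [tridiag]
  rw [det_succ_column_zero, Fin.sum_univ_succ, Fin.sum_univ_succ, Fin.succ_zero_eq_one,
    Fin.succAbove_zero, tridiag_submatrix_succ, hminor]
  simp only [h00, h10, hcol, mul_zero, zero_mul, Finset.sum_const_zero, add_zero, Fin.val_zero,
    Fin.val_one, pow_zero, pow_one]
  ring

end Matrix

open Matrix

lemma motzkinPoly_zero (k : ℤ) : motzkinPoly 0 k = if k = 0 then 1 else 0 := by
  rw [motzkinPoly]

lemma motzkinPoly_succ (n : ℕ) {k : ℤ} (hk : 0 ≤ k) :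
    motzkinPoly (n + 1) k =
      motzkinPoly n (k - 1) + X * motzkinPoly n k + motzkinPoly n (k + 1) := by
  rw [motzkinPoly, if_neg (not_lt.mpr hk)]

lemma motzkinPoly_of_neg (n : ℕ) {k : ℤ} (hk : k < 0) : motzkinPoly n k = 0 := by
  cases n with
  | zero => rw [motzkinPoly_zero, if_neg hk.ne]
  | succ n => rw [motzkinPoly, if_pos hk]

lemma motzkinPoly_of_lt {n : ℕ} {k : ℤ} (hk : n < k) : motzkinPoly n k = 0 := by
  induction n generalizing k with
  | zero => rw [motzkinPoly_zero, if_neg (by omega)]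
  | succ n ih =>
    rw [motzkinPoly_succ n (by omega), ih (by omega), ih (by omega), ih (by omega)]
    simp

lemma motzkinPoly_self (n : ℕ) : motzkinPoly n n = 1 := by
  induction n with
  | zero => simp [motzkinPoly_zero]
  | succ n ih =>
    rw [motzkinPoly_succ n (by positivity), Nat.cast_succ, add_sub_cancel_right, ih,
      motzkinPoly_of_lt (k := n + 1) (by omega), motzkinPoly_of_lt (k := n + 1 + 1) (by omega)]
    simp

/-- Truncating `tridiag X` to size `N` only loses the term `M_{m,N}`, which vanishes for
`m < N`. -/
lemma sum_motzkinPoly_mul_tridiag (m : ℕ) {N : ℕ} (k : Fin N)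
    (h : m < N ∨ (k : ℕ) + 1 < N) :
    ∑ l : Fin N, motzkinPoly m l * tridiag X N l k = motzkinPoly (m + 1) k := by
  have hlow : ¬0 < (k : ℕ) → motzkinPoly m ((k : ℤ) - 1) = 0 :=
    fun hk => motzkinPoly_of_neg m (by omega)
  have hhigh : ¬(k : ℕ) + 1 < N → motzkinPoly m ((k : ℤ) + 1) = 0 :=
    fun hk => motzkinPoly_of_lt (by omega)
  rw [sum_mul_tridiag_apply (motzkinPoly m), motzkinPoly_succ m (by positivity)]
  split_ifs <;> simp [*]

lemma sum_motzkinPoly_mul_motzkinPoly (a : ℕ) {b N : ℕ} (hb : b < N) :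
    ∑ k : Fin N, motzkinPoly a k * motzkinPoly b k = motzkinPoly (a + b) 0 := by
  induction b generalizing a with
  | zero =>
    rw [Fintype.sum_eq_single ⟨0, hb⟩ fun k hk => by
      have hk : 0 < (k : ℕ) := Nat.pos_of_ne_zero (Fin.val_ne_of_ne hk)
      rw [motzkinPoly_of_lt (n := 0) (by exact_mod_cast hk), mul_zero]]
    simp [motzkinPoly_zero]
  | succ b ih =>
    calc ∑ k : Fin N, motzkinPoly a k * motzkinPoly (b + 1) k
        = ∑ k : Fin N, motzkinPoly a k * ∑ l : Fin N, motzkinPoly b l * tridiag X N l k :=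
          Finset.sum_congr rfl fun k _ => by
            rw [sum_motzkinPoly_mul_tridiag b k (Or.inl (by omega))]
      _ = ∑ l : Fin N, motzkinPoly b l * ∑ k : Fin N, motzkinPoly a k * tridiag X N k l := by
          simp_rw [Finset.mul_sum]
          rw [Finset.sum_comm]
          simp_rw [(isSymm_tridiag _ N).apply, mul_left_comm]
      _ = ∑ l : Fin N, motzkinPoly b l * motzkinPoly (a + 1) l := by
          refine Finset.sum_congr rfl fun l _ => ?_
          by_cases hl : (l : ℕ) + 1 < N
          · rw [sum_motzkinPoly_mul_tridiag a l (Or.inr hl)]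
          · rw [motzkinPoly_of_lt (by omega), zero_mul, zero_mul]
      _ = motzkinPoly (a + (b + 1)) 0 := by
          simp_rw [mul_comm (motzkinPoly b _), ih (a + 1) (by omega), add_right_comm, add_assoc]

noncomputable def motzkinTriangle (n : ℕ) : Matrix (Fin n) (Fin n) ℤ[X] :=
  of fun i k => motzkinPoly i k

lemma det_motzkinTriangle (n : ℕ) : (motzkinTriangle n).det = 1 := by
  have hlower : (motzkinTriangle n).IsLowerTriangular := fun i k (hik : i < k) =>
    motzkinPoly_of_lt (by exact_mod_cast hik)
  rw [det_of_isLowerTriangular _ hlower]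
  simp [motzkinTriangle, motzkinPoly_self]

lemma hankel_eq_motzkinTriangle_mul_tridiag_mul_transpose (n : ℕ) :
    (of fun i j : Fin n => motzkinPoly (1 + (i : ℕ) + (j : ℕ)) 0) =
      motzkinTriangle n * tridiag X n * (motzkinTriangle n)ᵀ := by
  refine Matrix.ext fun i j => ?_
  have hrow : ∀ l : Fin n,
      (motzkinTriangle n * tridiag X n : Matrix (Fin n) (Fin n) ℤ[X]) i l =
        motzkinPoly (i + 1) l :=
    fun l => sum_motzkinPoly_mul_tridiag i l (Or.inl i.isLt)
  rw [mul_apply]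
  simp only [hrow, transpose_apply]
  simp only [motzkinTriangle, of_apply, sum_motzkinPoly_mul_motzkinPoly _ j.isLt, add_comm 1]

lemma det_tridiag_X_eq_fibPoly : ∀ n, (tridiag (X : ℤ[X]) n).det = fibPoly n
  | 0 => by simp [fibPoly]
  | 1 => by simp [tridiag, fibPoly]
  | n + 2 => by
    rw [det_tridiag_succ_succ, det_tridiag_X_eq_fibPoly (n + 1), det_tridiag_X_eq_fibPoly n,
      fibPoly]

/-- The shifted Hankel determinant `d_1(n,t) = det(M_{1+i+j}(t))` equals `F_n(t)`. -/
theorem hankel_det_motzkin_shift_one (n : ℕ) :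
    Matrix.det (Matrix.of fun i j : Fin n => motzkinPoly (1 + (i : ℕ) + (j : ℕ)) 0) =
      fibPoly n := by
  rw [hankel_eq_motzkinTriangle_mul_tridiag_mul_transpose, det_mul, det_mul, det_transpose,
    det_motzkinTriangle, det_tridiag_X_eq_fibPoly, one_mul, mul_one]
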